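/- Let F and B be n × n column-stochastic matrices, let 0 < α₁, α₂, α₃ < 1, let d ∈ ℝⁿ, and let t* be the unique solution of the RepRank equation t = α₁ F P₊(t) + α₂ B P₋(t) + α₃ d. Then the iterates t⁽ᵏ⁺¹⁾ = α₁ F P₊(t⁽ᵏ⁾) + α₂ B P₋(t⁽ᵏ⁾) + α₃ d satisfy the geometric error bound ‖t⁽ᵏ⁾ − t*‖₁ ≤ (max(α₁, α₂))ᵏ ‖t⁽⁰⁾ − t*‖₁ for all k ≥ 0 and any initial vector t⁽⁰⁾ ∈ ℝⁿ. -/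

import Mathlib

/-!
The RepRank map `T t = α₁ F P₊(t) + α₂ B P₋(t) + α₃ d` is a contraction for `l1` with
constant `max α₁ α₂`: a column-stochastic matrix does not increase `l1`, and the positive and
negative parts split the distance exactly, `|a₊ - b₊| + |a₋ - b₋| = |a - b|`. Iterating the
contraction estimate against the fixed point `t*` gives the geometric bound.
-/

/-- Replace negative components by zero. -/
def Ppos {n : ℕ} (t : Fin n → ℝ) : Fin n → ℝ := fun i => max (t i) 0

/-- Replace positive components by zero. -/
def Pneg {n : ℕ} (t : Fin n → ℝ) : Fin n → ℝ := fun i => min (t i) 0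

/-- ℓ¹ norm on ℝⁿ. -/
def l1 {n : ℕ} (x : Fin n → ℝ) : ℝ := ∑ i, |x i|

/-- A matrix is column-stochastic if entries are nonnegative and each column sums to 1. -/
def ColStochastic {n : ℕ} (F : Matrix (Fin n) (Fin n) ℝ) : Prop :=
  (∀ i j, 0 ≤ F i j) ∧ ∀ j, ∑ i, F i j = 1

open Finset Matrix

lemma l1_nonneg {n : ℕ} (x : Fin n → ℝ) : 0 ≤ l1 x :=
  sum_nonneg fun i _ => abs_nonneg (x i)

lemma l1_add_le {n : ℕ} (x y : Fin n → ℝ) : l1 (x + y) ≤ l1 x + l1 y := by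
  rw [l1, l1, l1, ← sum_add_distrib]
  exact sum_le_sum fun i _ => abs_add_le (x i) (y i)

lemma l1_smul {n : ℕ} (c : ℝ) (x : Fin n → ℝ) : l1 (c • x) = |c| * l1 x := by
  simp only [l1, Pi.smul_apply, smul_eq_mul, abs_mul, mul_sum]

lemma ColStochastic.l1_mulVec_le {n : ℕ} {F : Matrix (Fin n) (Fin n) ℝ} (hF : ColStochastic F)
    (v : Fin n → ℝ) : l1 (F *ᵥ v) ≤ l1 v :=
  calc l1 (F *ᵥ v) = ∑ i, |∑ j, F i j * v j| := rfl
    _ ≤ ∑ i, ∑ j, F i j * |v j| := by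
        refine sum_le_sum fun i _ => (abs_sum_le_sum_abs _ _).trans_eq ?_
        simp only [abs_mul, abs_of_nonneg (hF.1 i _)]
    _ = ∑ j, (∑ i, F i j) * |v j| := by
        rw [sum_comm]
        simp only [sum_mul]
    _ = l1 v := by simp only [hF.2, one_mul, l1]

lemma abs_max_sub_max_add_abs_min_sub_min (a b : ℝ) :
    |max a 0 - max b 0| + |min a 0 - min b 0| = |a - b| := by
  have ha := max_add_min a 0
  have hb := max_add_min b 0
  rcases le_total a b with hab | hba
  · have hmax : max a 0 ≤ max b 0 := max_le_max hab le_rfl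
    have hmin : min a 0 ≤ min b 0 := min_le_min hab le_rfl
    rw [abs_of_nonpos (by linarith), abs_of_nonpos (by linarith), abs_of_nonpos (by linarith)]
    linarith
  · have hmax : max b 0 ≤ max a 0 := max_le_max hba le_rfl
    have hmin : min b 0 ≤ min a 0 := min_le_min hba le_rfl
    rw [abs_of_nonneg (by linarith), abs_of_nonneg (by linarith), abs_of_nonneg (by linarith)]
    linarith

lemma l1_Ppos_sub_add_l1_Pneg_sub {n : ℕ} (x y : Fin n → ℝ) :
    l1 (Ppos x - Ppos y) + l1 (Pneg x - Pneg y) = l1 (x - y) := by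
  rw [l1, l1, l1, ← sum_add_distrib]
  exact sum_congr rfl fun i _ => abs_max_sub_max_add_abs_min_sub_min (x i) (y i)

noncomputable def repRankMap {n : ℕ} (F B : Matrix (Fin n) (Fin n) ℝ) (α₁ α₂ α₃ : ℝ)
    (d t : Fin n → ℝ) : Fin n → ℝ :=
  α₁ • F *ᵥ Ppos t + α₂ • B *ᵥ Pneg t + α₃ • d

lemma repRankMap_sub {n : ℕ} (F B : Matrix (Fin n) (Fin n) ℝ) (α₁ α₂ α₃ : ℝ)
    (d x y : Fin n → ℝ) :
    repRankMap F B α₁ α₂ α₃ d x - repRankMap F B α₁ α₂ α₃ d y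
      = α₁ • F *ᵥ (Ppos x - Ppos y) + α₂ • B *ᵥ (Pneg x - Pneg y) := by
  simp only [repRankMap, mulVec_sub, smul_sub]
  abel

lemma l1_repRankMap_sub_le {n : ℕ} {F B : Matrix (Fin n) (Fin n) ℝ}
    (hF : ColStochastic F) (hB : ColStochastic B) {α₁ α₂ : ℝ} (hα₁ : 0 ≤ α₁) (hα₂ : 0 ≤ α₂)
    (α₃ : ℝ) (d x y : Fin n → ℝ) :
    l1 (repRankMap F B α₁ α₂ α₃ d x - repRankMap F B α₁ α₂ α₃ d y)
      ≤ max α₁ α₂ * l1 (x - y) :=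
  calc l1 (repRankMap F B α₁ α₂ α₃ d x - repRankMap F B α₁ α₂ α₃ d y)
      ≤ α₁ * l1 (F *ᵥ (Ppos x - Ppos y)) + α₂ * l1 (B *ᵥ (Pneg x - Pneg y)) := by
        rw [repRankMap_sub]
        refine (l1_add_le _ _).trans_eq ?_
        rw [l1_smul, l1_smul, abs_of_nonneg hα₁, abs_of_nonneg hα₂]
    _ ≤ max α₁ α₂ * l1 (Ppos x - Ppos y) + max α₁ α₂ * l1 (Pneg x - Pneg y) := by
        gcongr
        · exact l1_nonneg _
        · exact le_max_left _ _
        · exact hF.l1_mulVec_le _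
        · exact l1_nonneg _
        · exact le_max_right _ _
        · exact hB.l1_mulVec_le _
    _ = max α₁ α₂ * l1 (x - y) := by rw [← mul_add, l1_Ppos_sub_add_l1_Pneg_sub]

lemma l1_iterate_sub_fixedPoint_le {n : ℕ} {T : (Fin n → ℝ) → Fin n → ℝ} {c : ℝ} (hc : 0 ≤ c)
    (hT : ∀ x y, l1 (T x - T y) ≤ c * l1 (x - y)) {t : Fin n → ℝ} (ht : t = T t)
    {u : ℕ → Fin n → ℝ} (hu : ∀ k, u (k + 1) = T (u k)) (k : ℕ) :
    l1 (u k - t) ≤ c ^ k * l1 (u 0 - t) := by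
  induction k with
  | zero => simp
  | succ k ih =>
    calc l1 (u (k + 1) - t) ≤ c * l1 (u k - t) := by
          rw [hu k]
          nth_rewrite 1 [ht]
          exact hT _ _
      _ ≤ c * (c ^ k * l1 (u 0 - t)) := mul_le_mul_of_nonneg_left ih hc
      _ = c ^ (k + 1) * l1 (u 0 - t) := by ring

theorem repRank_geometric_error_bound_general {n : ℕ} (F B : Matrix (Fin n) (Fin n) ℝ)
    (hF : ColStochastic F) (hB : ColStochastic B)
    (α₁ α₂ α₃ : ℝ) (hα₁ : 0 < α₁) (hα₂ : 0 < α₂)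
    (d : Fin n → ℝ)
    (tstar : Fin n → ℝ)
    (hstar : tstar = α₁ • F.mulVec (Ppos tstar) + α₂ • B.mulVec (Pneg tstar) + α₃ • d)
    (u : ℕ → (Fin n → ℝ))
    (hu : ∀ k, u (k + 1) = α₁ • F.mulVec (Ppos (u k)) + α₂ • B.mulVec (Pneg (u k)) + α₃ • d)
    (k : ℕ) :
    l1 (u k - tstar) ≤ (max α₁ α₂) ^ k * l1 (u 0 - tstar) :=
  l1_iterate_sub_fixedPoint_le (le_max_of_le_left hα₁.le)
    (l1_repRankMap_sub_le hF hB hα₁.le hα₂.le α₃ d) hstar hu k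

theorem repRank_geometric_error_bound {n : ℕ} (F B : Matrix (Fin n) (Fin n) ℝ)
    (hF : ColStochastic F) (hB : ColStochastic B)
    (α₁ α₂ α₃ : ℝ) (hα₁ : 0 < α₁) (hα₁' : α₁ < 1) (hα₂ : 0 < α₂) (hα₂' : α₂ < 1)
    (hα₃ : 0 < α₃) (hα₃' : α₃ < 1) (d : Fin n → ℝ)
    (tstar : Fin n → ℝ)
    (hstar : tstar = α₁ • F.mulVec (Ppos tstar) + α₂ • B.mulVec (Pneg tstar) + α₃ • d)
    (u : ℕ → (Fin n → ℝ))
    (hu : ∀ k, u (k + 1) = α₁ • F.mulVec (Ppos (u k)) + α₂ • B.mulVec (Pneg (u k)) + α₃ • d)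
    (k : ℕ) :
    l1 (u k - tstar) ≤ (max α₁ α₂) ^ k * l1 (u 0 - tstar) :=
  repRank_geometric_error_bound_general F B hF hB α₁ α₂ α₃ hα₁ hα₂ d tstar hstar u hu k
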